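/- Let C be a finite-dimensional chain complex over ℚ with an increasing exhaustive filtration (F_m) by subcomplexes, and suppose H_*(C) ≅ ℚ. Let C* be the dual cochain complex with the dual (quotient) filtration, i.e. let Q_m = (C / F_{-m-1})* viewed as the subcomplex of C* of functionals vanishing on F_{-m-1}... Define τ(C, F) = min{ m : H_*(F_m) → H_*(C) is nonzero }. Then the inclusion-induced map H(F_m) → H(C) is nonzero if and only if the projection-induced map H(C*) → H((F_{m})*) is nonzero, and consequently τ of the dual filtered complex equals -τ(C, F). -/
import Mathlib

private lemma dual_ann {C : Type*} [AddCommGroup C] [Module ℚ C]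
    (W : Submodule ℚ C) (z : C) (hz : z ∉ W) :
    ∃ φ : Module.Dual ℚ C, (∀ x ∈ W, φ x = 0) ∧ φ z ≠ 0 := by
  have hz' : (Submodule.Quotient.mk z : C ⧸ W) ≠ 0 := by
    simpa [Submodule.Quotient.mk_eq_zero] using hz
  obtain ⟨f, hf⟩ : ∃ f : Module.Dual ℚ (C ⧸ W), f (Submodule.Quotient.mk z) ≠ 0 := by
    by_contra h
    push_neg at h
    exact hz' ((Module.forall_dual_apply_eq_zero_iff ℚ _).mp h)
  refine ⟨f ∘ₗ W.mkQ, fun x hx => ?_, hf⟩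
  simp [Submodule.mkQ_apply, (Submodule.Quotient.mk_eq_zero W).mpr hx]

private lemma factor_through_d {C : Type*} [AddCommGroup C] [Module ℚ C]
    (d : C →ₗ[ℚ] C) (φ : Module.Dual ℚ C) (p : Submodule ℚ C)
    (h0 : ∀ x ∈ p, d x = 0 → φ x = 0) :
    ∃ ψ : Module.Dual ℚ C, ∀ x ∈ p, φ x = ψ (d x) := by
  set g : p →ₗ[ℚ] C := d ∘ₗ p.subtype with hg
  set f : p →ₗ[ℚ] ℚ := φ ∘ₗ p.subtype with hf
  have hker : LinearMap.ker g ≤ LinearMap.ker f := by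
    intro x hx
    simp only [LinearMap.mem_ker, hg, hf, LinearMap.comp_apply, Submodule.subtype_apply] at *
    exact h0 x.1 x.2 hx
  obtain ⟨ψ, hψ⟩ := LinearMap.exists_extend
    (((LinearMap.ker g).liftQ f hker) ∘ₗ (g.quotKerEquivRange.symm : LinearMap.range g →ₗ[ℚ] _))
  refine ⟨ψ, fun x hx => ?_⟩
  have h1 : d x = (LinearMap.range g).subtype ⟨g ⟨x, hx⟩, LinearMap.mem_range_self g ⟨x, hx⟩⟩ := rfl
  rw [h1, ← LinearMap.comp_apply, hψ]
  simp only [LinearMap.comp_apply, LinearEquiv.coe_coe]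
  rw [g.quotKerEquivRange_symm_apply_image ⟨x, hx⟩]
  simp [hf]
/-- Duality for filtered complexes over `ℚ` (the algebra behind `τ(-K) = -τ(K)`).
For a finite-dimensional filtered complex `(C, d, F)` with `H(C) ≅ ℚ`, the
inclusion-induced map `H(F_m) → H(C)` is nonzero iff the projection-induced map
`H(C*) → H((F_m)*)` is nonzero; and if `τ` is the minimal `m` for which the
inclusion-induced map is nonzero, then `-τ` is the minimal level at which the
dual filtration `G_m = ann(F_{-m-1})` has nonzero inclusion-induced map on
cohomology. -/
theorem filtered_complex_duality
    (C : Type*) [AddCommGroup C] [Module ℚ C] [FiniteDimensional ℚ C]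
    (d : C →ₗ[ℚ] C) (hd : d ∘ₗ d = 0)
    (F : ℤ → Submodule ℚ C) (hmono : Monotone F)
    (hinv : ∀ m : ℤ, ∀ x ∈ F m, d x ∈ F m)
    (hexh : (⨆ m : ℤ, F m) = ⊤)
    (hbot : ∃ M : ℤ, ∀ m ≤ M, F m = ⊥)
    (hH : ∃ z : C, d z = 0 ∧ z ∉ LinearMap.range d ∧
      ∀ x : C, d x = 0 → ∃ c : ℚ, x - c • z ∈ LinearMap.range d)
    (τ : ℤ)
    (hτ : IsLeast {m : ℤ | ∃ x ∈ F m, d x = 0 ∧ x ∉ LinearMap.range d} τ) :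
    (∀ m : ℤ,
      (∃ x ∈ F m, d x = 0 ∧ x ∉ LinearMap.range d) ↔
      (∃ φ : Module.Dual ℚ C, φ ∘ₗ d = 0 ∧
        ∀ ψ : Module.Dual ℚ C, ∃ x ∈ F m, φ x ≠ ψ (d x))) ∧
    IsLeast {m : ℤ | ∃ φ : Module.Dual ℚ C, φ ∘ₗ d = 0 ∧
        (∀ x ∈ F (-m - 1), φ x = 0) ∧
        ¬∃ ψ : Module.Dual ℚ C, φ = ψ ∘ₗ d} (-τ) := by
  obtain ⟨z, hz1, hz2, hz3⟩ := hH
  -- Part 1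
  have part1 : ∀ m : ℤ,
      (∃ x ∈ F m, d x = 0 ∧ x ∉ LinearMap.range d) ↔
      (∃ φ : Module.Dual ℚ C, φ ∘ₗ d = 0 ∧
        ∀ ψ : Module.Dual ℚ C, ∃ x ∈ F m, φ x ≠ ψ (d x)) := by
    intro m
    constructor
    · rintro ⟨x, hxF, hxc, hxb⟩
      obtain ⟨c, w, hw⟩ := hz3 x hxc
      have hc : c ≠ 0 := by
        rintro rfl
        exact hxb ⟨w, by simpa using hw⟩
      obtain ⟨φ, hφW, hφz⟩ := dual_ann (LinearMap.range d) z hz2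
      refine ⟨φ, ?_, ?_⟩
      · ext y
        exact hφW (d y) ⟨y, rfl⟩
      · intro ψ
        refine ⟨x, hxF, ?_⟩
        have hφx : φ x = c * φ z := by
          have : φ (x - c • z) = 0 := hφW _ ⟨w, hw⟩
          have h2 : φ x - c * φ z = 0 := by simpa [map_sub, map_smul] using this
          linarith
        rw [hxc]
        simp only [map_zero]
        rw [hφx]
        exact mul_ne_zero hc hφz
    · rintro ⟨φ, hφd, hall⟩
      by_contra h
      push_neg at h
      have h0 : ∀ x ∈ F m, d x = 0 → φ x = 0 := by
        intro x hx hdx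
        obtain ⟨w, hw⟩ := h x hx hdx
        rw [← hw]
        exact LinearMap.congr_fun hφd w
      obtain ⟨ψ, hψ⟩ := factor_through_d d φ (F m) h0
      obtain ⟨x, hx, hne⟩ := hall ψ
      exact hne (hψ x hx)
  refine ⟨part1, ?_, ?_⟩
  · -- -τ is a member
    obtain ⟨x, hxF, hxc, hxb⟩ := hτ.1
    have hlow : ∀ y ∈ F (τ - 1), d y = 0 → y ∈ LinearMap.range d := by
      intro y hy hdy
      by_contra hyb
      have : τ ≤ τ - 1 := hτ.2 ⟨y, hy, hdy, hyb⟩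
      omega
    have hzW : z ∉ F (τ - 1) ⊔ LinearMap.range d := by
      intro hz
      rw [Submodule.mem_sup] at hz
      obtain ⟨a, ha, b, ⟨w, rfl⟩, hab⟩ := hz
      have hda : d a = 0 := by
        have h1 : d (a + d w) = d z := by rw [hab]
        have hdd : d (d w) = 0 := LinearMap.congr_fun hd w
        rw [map_add, hdd, hz1, add_zero] at h1
        exact h1
      obtain ⟨v, hv⟩ := hlow a ha hda
      exact hz2 ⟨v + w, by rw [map_add, hv, hab]⟩
    obtain ⟨φ, hφW, hφz⟩ := dual_ann _ z hzW
    refine ⟨φ, ?_, ?_, ?_⟩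
    · ext y
      exact hφW (d y) (Submodule.mem_sup_right ⟨y, rfl⟩)
    · intro y hy
      have : ((-(-τ) - 1 : ℤ)) = τ - 1 := by ring
      rw [this] at hy
      exact hφW y (Submodule.mem_sup_left hy)
    · rintro ⟨ψ, rfl⟩
      apply hφz
      simp [hz1]
  · -- lower bound
    rintro m ⟨φ, hφd, hφF, hφnb⟩
    have hφrange : ∀ y ∈ LinearMap.range d, φ y = 0 := by
      rintro y ⟨w, rfl⟩
      exact LinearMap.congr_fun hφd w
    have hφz : φ z ≠ 0 := by
      intro hz0
      apply hφnb
      have h0 : ∀ x ∈ (⊤ : Submodule ℚ C), d x = 0 → φ x = 0 := by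
        intro x _ hdx
        obtain ⟨c, hc⟩ := hz3 x hdx
        have : φ (x - c • z) = 0 := hφrange _ hc
        have h2 : φ x - c * φ z = 0 := by simpa [map_sub, map_smul] using this
        rw [hz0] at h2
        linarith
      obtain ⟨ψ, hψ⟩ := factor_through_d d φ ⊤ h0
      exact ⟨ψ, by ext y; exact hψ y trivial⟩
    obtain ⟨x, hxF, hxc, hxb⟩ := hτ.1
    obtain ⟨c, w, hw⟩ := hz3 x hxc
    have hc : c ≠ 0 := by
      rintro rfl
      exact hxb ⟨w, by simpa using hw⟩
    have hφx : φ x ≠ 0 := by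
      have : φ (x - c • z) = 0 := hφrange _ ⟨w, hw⟩
      have h2 : φ x - c * φ z = 0 := by simpa [map_sub, map_smul] using this
      intro h3
      rw [h3] at h2
      have hcz : c * φ z = 0 := by linarith
      exact hφz ((mul_eq_zero.mp hcz).resolve_left hc)
    by_contra hlt
    push_neg at hlt
    have hle : τ ≤ -m - 1 := by omega
    exact hφx (hφF x (hmono hle hxF))
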